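/- For every ballot profile A = (A_1,…,A_n) over a candidate set C and every target committee size k with 1 ≤ k ≤ |C|, there exists a committee W ⊆ C with |W| = k that provides extended justified representation (EJR). -/

import Mathlib

open Finset

variable {C : Type*} [Fintype C] [DecidableEq C]

/-- The voters approving candidate `c`. -/
def approvers {n : ℕ} (A : Fin n → Finset C) (c : C) : Finset (Fin n) :=
  Finset.univ.filter (fun i => c ∈ A i)

/-- The exact quota `q = n / k`. -/
def quota (n k : ℕ) : ℚ := (n : ℚ) / (k : ℚ)

/-- Remaining support of candidate `c` under vote fractions `f`. -/
def supp {n : ℕ} (A : Fin n → Finset C) (f : Fin n → ℚ) (c : C) : ℚ :=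
  ∑ i ∈ approvers A c, f i

/-- The set `W_j = {w_1, …, w_j}` of the first `j` winners. -/
def Wset (w : ℕ → C) (j : ℕ) : Finset C := (Finset.Icc 1 j).image w

/-- The candidates approved by every voter in `Ns`, i.e. `⋂_{i ∈ Ns} A i`. -/
def commonApproved {n : ℕ} (A : Fin n → Finset C) (Ns : Finset (Fin n)) : Finset C :=
  Finset.univ.filter (fun c => ∀ i ∈ Ns, c ∈ A i)

/-- `Ns` is an `ℓ`-cohesive group of voters: `|Ns| ≥ ℓ·n/k` and `|⋂_{i ∈ Ns} A i| ≥ ℓ`. -/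
def Cohesive {n : ℕ} (A : Fin n → Finset C) (k ℓ : ℕ) (Ns : Finset (Fin n)) : Prop :=
  (ℓ : ℚ) * (n : ℚ) / (k : ℚ) ≤ (Ns.card : ℚ) ∧ ℓ ≤ (commonApproved A Ns).card

/-- `W` provides proportional justified representation for `(A, k)`. -/
def ProvidesPJR {n : ℕ} (A : Fin n → Finset C) (k : ℕ) (W : Finset C) : Prop :=
  ∀ ℓ : ℕ, 1 ≤ ℓ → ℓ ≤ k → ∀ Ns : Finset (Fin n), Cohesive A k ℓ Ns →
    ℓ ≤ (W ∩ Ns.biUnion A).card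

/-- `W` provides extended justified representation for `(A, k)`. -/
def ProvidesEJR {n : ℕ} (A : Fin n → Finset C) (k : ℕ) (W : Finset C) : Prop :=
  ∀ ℓ : ℕ, 1 ≤ ℓ → ℓ ≤ k → ∀ Ns : Finset (Fin n), Cohesive A k ℓ Ns →
    ∃ i ∈ Ns, ℓ ≤ (A i ∩ W).card

/-- The set of `ℓ`'s satisfying the dissatisfaction-level fixpoint equation
`ℓ = ⌊(k/n)·|{i : c ∈ A_i ∧ |A_i ∩ W| < ℓ}|⌋`
(natural-number division `k * m / n` is exactly the floor `⌊(k/n)·m⌋`). -/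
def dissatSet {n : ℕ} (A : Fin n → Finset C) (k : ℕ) (W : Finset C) (c : C) : Set ℕ :=
  {ℓ : ℕ | ℓ = k * (Finset.univ.filter (fun i => c ∈ A i ∧ (A i ∩ W).card < ℓ)).card / n}

/-- The dissatisfaction level `ℓ(c, W)`: the largest non-negative integer satisfying
the fixpoint equation. -/
noncomputable def dissat {n : ℕ} (A : Fin n → Finset C) (k : ℕ) (W : Finset C) (c : C) : ℕ :=
  sSup (dissatSet A k W c)

/-- `ℓ_W(i, c) = max_{c' ∈ A_i \ (W ∪ {c})} ℓ(c', W)` (with `max ∅ = 0`). -/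
noncomputable def dissatVoter {n : ℕ} (A : Fin n → Finset C) (k : ℕ) (W : Finset C)
    (i : Fin n) (c : C) : ℕ :=
  (A i \ insert c W).sup (dissat A k W)

/-- `ℓ_W(i) = max_{c ∈ A_i \ W} ℓ(c, W)` (with `max ∅ = 0`). -/
noncomputable def dissatVoterAll {n : ℕ} (A : Fin n → Finset C) (k : ℕ) (W : Finset C)
    (i : Fin n) : ℕ :=
  (A i \ W).sup (dissat A k W)

/-- `g_i(c)` relative to the committee `W`. -/
noncomputable def gfun {n : ℕ} (A : Fin n → Finset C) (k : ℕ) (W : Finset C)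
    (i : Fin n) (c : C) : ℚ :=
  if dissatVoter A k W i c ≤ (A i ∩ W).card then 0
  else ((dissatVoter A k W i c : ℚ) - ((A i ∩ W).card : ℚ) - 1) / (dissatVoter A k W i c : ℚ)

/-- Candidate `c ∉ W` is in a normal state (w.r.t. committee `W` and fractions `f`). -/
def NormalState {n : ℕ} (A : Fin n → Finset C) (k : ℕ) (f : Fin n → ℚ) (W : Finset C)
    (c : C) : Prop :=
  (∀ i : Fin n, c ∈ A i → (A i ∩ W).card < dissatVoter A k W i c →
      ((dissatVoter A k W i c : ℚ) - ((A i ∩ W).card : ℚ)) / (dissatVoter A k W i c : ℚ) ≤ f i) ∧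
  quota n k ≤ ∑ i ∈ approvers A c, (f i - gfun A k W i c)

/-- Candidate `c ∉ W` is in a starving state. -/
def StarvingState {n : ℕ} (A : Fin n → Finset C) (k : ℕ) (f : Fin n → ℚ) (W : Finset C)
    (c : C) : Prop :=
  ∃ i : Fin n, c ∈ A i ∧ (A i ∩ W).card < dissatVoter A k W i c ∧
    f i < ((dissatVoter A k W i c : ℚ) - ((A i ∩ W).card : ℚ)) / (dissatVoter A k W i c : ℚ)

/-- Candidate `c ∉ W` is in an eager state. -/
def EagerState {n : ℕ} (A : Fin n → Finset C) (k : ℕ) (f : Fin n → ℚ) (W : Finset C)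
    (c : C) : Prop :=
  ¬ StarvingState A k f W c ∧ quota n k ≤ supp A f c ∧
    ∑ i ∈ approvers A c, (f i - gfun A k W i c) < quota n k

/-- A run of a voting rule in the PJR-Exact family: a sequence of distinct winners
`w 1, …, w k` together with fraction functions `f 0, …, f k` satisfying the three
defining conditions of the family. -/
structure PJRExactRun (n k : ℕ) (A : Fin n → Finset C) where
  w : ℕ → C
  f : ℕ → Fin n → ℚ
  /-- the selected candidates are pairwise distinct -/
  w_inj : ∀ j j' : ℕ, 1 ≤ j → j ≤ k → 1 ≤ j' → j' ≤ k → w j = w j' → j = j'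
  /-- initially each voter has her whole vote -/
  f_zero : ∀ i, f 0 i = 1
  /-- fractions stay non-negative -/
  f_nonneg : ∀ j, 1 ≤ j → j ≤ k → ∀ i, 0 ≤ f j i
  /-- fractions never increase -/
  f_mono : ∀ j, 1 ≤ j → j ≤ k → ∀ i, f j i ≤ f (j - 1) i
  /-- if the remaining support of the winner exceeds the quota, exactly `q` votes are removed -/
  remove_big : ∀ j, 1 ≤ j → j ≤ k → quota n k < supp A (f (j - 1)) (w j) →
    ∑ i ∈ approvers A (w j), (f (j - 1) i - f j i) = quota n k
  /-- if the remaining support of the winner is at most the quota, all of it is removed -/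
  remove_small : ∀ j, 1 ≤ j → j ≤ k → supp A (f (j - 1)) (w j) ≤ quota n k →
    ∀ i, w j ∈ A i → f j i = 0
  /-- voters not approving the winner keep their fractions -/
  f_untouched : ∀ j, 1 ≤ j → j ≤ k → ∀ i, w j ∉ A i → f j i = f (j - 1) i
  /-- if some unelected candidate has remaining support at least `q`,
  then so has the selected one -/
  greedy : ∀ j, 1 ≤ j → j ≤ k →
    (∃ c, c ∉ Wset w (j - 1) ∧ quota n k ≤ supp A (f (j - 1)) c) →
    quota n k ≤ supp A (f (j - 1)) (w j)

/-- Iteration `j` of a PJR-Exact run is normal. -/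
def NormalIteration {n k : ℕ} {A : Fin n → Finset C} (R : PJRExactRun n k A) (j : ℕ) : Prop :=
  NormalState A k (R.f (j - 1)) (Wset R.w (j - 1)) (R.w j) ∧
  ∀ i : Fin n, R.w j ∈ A i →
    (A i ∩ Wset R.w (j - 1)).card < dissatVoter A k (Wset R.w (j - 1)) i (R.w j) →
    ((dissatVoter A k (Wset R.w (j - 1)) i (R.w j) : ℚ) - ((A i ∩ Wset R.w j).card : ℚ)) /
      (dissatVoter A k (Wset R.w (j - 1)) i (R.w j) : ℚ) ≤ R.f j i

/-! A size-`k` committee `W` maximising the PAV score `∑ᵢ H(|Aᵢ ∩ W|)` provides EJR. Otherwise some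
`ℓ`-cohesive group `Ns` has all members below `ℓ`, and adding a commonly approved `c ∉ W` raises the
score by `g ≥ |Ns|/ℓ ≥ n/k`. In `W ∪ {c}` the marginal contributions of the members sum to at most
`n`, since each voter's contribution splits evenly over the members she approves, and `c`
contributes `g`; so some member of `W` contributes at most `(n - g)/k < g`, and swapping it for `c`
raises the score. -/

section PAV

variable {α : Type*} [DecidableEq α] {n : ℕ} (A : Fin n → Finset α)

def pavScore (W : Finset α) : ℚ :=
  ∑ i, harmonic (A i ∩ W).card

def pavMarginal (W : Finset α) (c : α) : ℚ :=
  ∑ i ∈ approvers A c, ((A i ∩ W).card : ℚ)⁻¹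

theorem exists_isMax_pavScore [Fintype α] {k : ℕ} (hkα : k ≤ Fintype.card α) :
    ∃ W : Finset α, W.card = k ∧
      ∀ W' : Finset α, W'.card = k → pavScore A W' ≤ pavScore A W := by
  obtain ⟨W, hW, hmax⟩ := Finset.exists_max_image (Finset.powersetCard k Finset.univ)
    (pavScore A) (Finset.powersetCard_nonempty.2 (by simpa using hkα))
  exact ⟨W, (Finset.mem_powersetCard.1 hW).2, fun W' hW' =>
    hmax W' (Finset.mem_powersetCard.2 ⟨Finset.subset_univ _, hW'⟩)⟩

variable {A}

@[simp]
theorem mem_commonApproved [Fintype α] {Ns : Finset (Fin n)} {c : α} :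
    c ∈ commonApproved A Ns ↔ ∀ i ∈ Ns, c ∈ A i := by
  simp [commonApproved]

theorem pavScore_erase_add_pavMarginal {W : Finset α} {c : α} (hc : c ∈ W) :
    pavScore A (W.erase c) + pavMarginal A W c = pavScore A W := by
  rw [pavScore, pavMarginal, approvers, Finset.sum_filter, ← Finset.sum_add_distrib]
  refine Finset.sum_congr rfl fun i _ => ?_
  rw [Finset.inter_erase]
  split_ifs with hci
  · have hmem : c ∈ A i ∩ W := Finset.mem_inter.2 ⟨hci, hc⟩
    obtain ⟨m, hm⟩ : ∃ m, (A i ∩ W).card = m + 1 :=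
      Nat.exists_eq_succ_of_ne_zero (Finset.card_ne_zero_of_mem hmem)
    rw [Finset.card_erase_of_mem hmem, hm, harmonic_succ, Nat.add_sub_cancel]
  · rw [Finset.erase_eq_of_notMem fun h => hci (Finset.mem_inter.1 h).1, add_zero]

theorem sum_pavMarginal_le (W : Finset α) : ∑ c ∈ W, pavMarginal A W c ≤ n := by
  have hswap : ∑ c ∈ W, pavMarginal A W c =
      ∑ i, ∑ _c ∈ A i ∩ W, ((A i ∩ W).card : ℚ)⁻¹ :=
    Finset.sum_comm' fun c i => by simp [approvers, and_comm]
  calc ∑ c ∈ W, pavMarginal A W c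
      = ∑ i, ((A i ∩ W).card : ℚ) / (A i ∩ W).card := by
        simp only [hswap, Finset.sum_const, nsmul_eq_mul, div_eq_mul_inv]
    _ ≤ ∑ _i : Fin n, (1 : ℚ) := Finset.sum_le_sum fun i _ => div_self_le_one _
    _ = n := by simp

theorem card_div_le_pavMarginal_insert {W : Finset α} {c : α} {Ns : Finset (Fin n)} {ℓ : ℕ}
    (hc : ∀ i ∈ Ns, c ∈ A i) (hbelow : ∀ i ∈ Ns, (A i ∩ W).card < ℓ) :
    (Ns.card : ℚ) / ℓ ≤ pavMarginal A (insert c W) c := by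
  have hterm : ∀ i ∈ Ns, (ℓ : ℚ)⁻¹ ≤ ((A i ∩ insert c W).card : ℚ)⁻¹ := by
    intro i hi
    rw [Finset.inter_insert_of_mem (hc i hi)]
    have hle := (Finset.card_insert_le c (A i ∩ W)).trans (hbelow i hi)
    exact inv_anti₀ (by exact_mod_cast Finset.card_pos.2 (Finset.insert_nonempty _ _))
      (by exact_mod_cast hle)
  calc (Ns.card : ℚ) / ℓ = ∑ _i ∈ Ns, (ℓ : ℚ)⁻¹ := by simp [div_eq_mul_inv]
    _ ≤ ∑ i ∈ Ns, ((A i ∩ insert c W).card : ℚ)⁻¹ := Finset.sum_le_sum hterm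
    _ ≤ pavMarginal A (insert c W) c :=
        Finset.sum_le_sum_of_subset_of_nonneg (fun i hi => by simp [approvers, hc i hi])
          fun _ _ _ => by positivity

theorem exists_pavScore_lt_swap {W : Finset α} {c : α} (hc : c ∉ W)
    (hgain : (n : ℚ) < (W.card + 1) * pavMarginal A (insert c W) c) :
    ∃ c' ∈ W, pavScore A W < pavScore A ((insert c W).erase c') := by
  set g := pavMarginal A (insert c W) c
  have htotal : g + ∑ c' ∈ W, pavMarginal A (insert c W) c' ≤ n := by
    simpa [Finset.sum_insert hc, g] using sum_pavMarginal_le (A := A) (insert c W)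
  have hsum : ∑ c' ∈ W, pavMarginal A (insert c W) c' < ∑ _c' ∈ W, g := by
    rw [Finset.sum_const, nsmul_eq_mul]
    linarith
  obtain ⟨c', hc'W, hlt⟩ := Finset.exists_lt_of_sum_lt hsum
  refine ⟨c', hc'W, ?_⟩
  have hadd := pavScore_erase_add_pavMarginal (A := A) (Finset.mem_insert_self c W)
  have hswap :=
    pavScore_erase_add_pavMarginal (A := A) (W := insert c W) (Finset.mem_insert_of_mem hc'W)
  rw [Finset.erase_insert hc] at hadd
  linarith

theorem exists_mem_commonApproved_notMem [Fintype α] {Ns : Finset (Fin n)} {i : Fin n}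
    {W : Finset α} (hi : i ∈ Ns) (hlt : (A i ∩ W).card < (commonApproved A Ns).card) :
    ∃ c ∈ commonApproved A Ns, c ∉ W := by
  by_contra! hsub
  refine hlt.not_ge (Finset.card_le_card fun c hc => ?_)
  exact Finset.mem_inter.2 ⟨mem_commonApproved.1 hc i hi, hsub c hc⟩

theorem providesEJR_of_isMax_pavScore [Fintype α] (hn : 0 < n) {k : ℕ} {W : Finset α}
    (hWk : W.card = k) (hmax : ∀ W' : Finset α, W'.card = k → pavScore A W' ≤ pavScore A W) :
    ProvidesEJR A k W := by
  intro ℓ hℓ hℓk Ns ⟨hsize, hcommon⟩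
  by_contra! hbelow
  have hkpos : (0 : ℚ) < k := by exact_mod_cast hℓ.trans hℓk
  have hℓpos : (0 : ℚ) < ℓ := by exact_mod_cast hℓ
  have hquota : (n : ℚ) / k ≤ Ns.card / ℓ := by
    rw [le_div_iff₀ hℓpos]
    linarith [show (n : ℚ) / k * ℓ = ℓ * n / k by ring]
  obtain ⟨i, hi⟩ : Ns.Nonempty := by
    rw [← Finset.card_pos, ← Nat.cast_pos (α := ℚ), ← div_pos_iff_of_pos_right hℓpos]
    exact lt_of_lt_of_le (by positivity) hquota
  obtain ⟨c, hc, hcW⟩ :=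
    exists_mem_commonApproved_notMem hi ((hbelow i hi).trans_le hcommon)
  have hgain : (n : ℚ) / k ≤ pavMarginal A (insert c W) c :=
    hquota.trans (card_div_le_pavMarginal_insert (mem_commonApproved.1 hc) hbelow)
  obtain ⟨c', hc'W, hlt⟩ := exists_pavScore_lt_swap (A := A) hcW <| calc
    (n : ℚ) < (k + 1) * (n / k) := by
      rw [add_mul, mul_div_cancel₀ _ hkpos.ne']
      linarith [show (0 : ℚ) < n / k by positivity]
    _ ≤ (W.card + 1) * pavMarginal A (insert c W) c := by
      rw [hWk]
      gcongr
  have hcard : ((insert c W).erase c').card = k := by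
    rw [Finset.card_erase_of_mem (Finset.mem_insert_of_mem hc'W),
      Finset.card_insert_of_notMem hcW, hWk, Nat.add_sub_cancel]
  exact (hmax _ hcard).not_gt hlt

end PAV

theorem exists_EJR_committee_general {C : Type*} [Fintype C] [DecidableEq C] {n : ℕ}
    (hn : 0 < n) (A : Fin n → Finset C) (k : ℕ) (hkC : k ≤ Fintype.card C) :
    ∃ W : Finset C, W.card = k ∧ ProvidesEJR A k W := by
  obtain ⟨W, hWk, hmax⟩ := exists_isMax_pavScore A hkC
  exact ⟨W, hWk, providesEJR_of_isMax_pavScore hn hWk hmax⟩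

/-- for every ballot profile and every target committee size there exists
a committee of that size providing EJR. -/
theorem exists_EJR_committee {C : Type*} [Fintype C] [DecidableEq C] {n : ℕ}
    (hn : 0 < n) (A : Fin n → Finset C) (k : ℕ) (hk : 1 ≤ k) (hkC : k ≤ Fintype.card C) :
    ∃ W : Finset C, W.card = k ∧ ProvidesEJR A k W :=
  exists_EJR_committee_general hn A k hkC
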